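/- Let a, ν, τ, h > 0 and set CFL = a τ / h, S = ν τ / h². Then the FTCS linear stability conditions S ≤ 1/2 and CFL² ≤ 2S together imply that for every real phase θ, the amplification factor G(θ) = 1 - i·CFL·sin θ - 4S·sin²(θ/2) of the FTCS scheme applied to the linear advection–diffusion equation u_t + a u_x = ν u_xx satisfies |G(θ)| ≤ 1. -/

import Mathlib

open Complex Real

/-- Von Neumann stability of the FTCS scheme for the linear advection–diffusion
equation: if `S = ντ/h² ≤ 1/2` and `CFL² = (aτ/h)² ≤ 2S`, then the amplification
factor `G(θ) = 1 - i·CFL·sin θ - 4S·sin²(θ/2)` satisfies `|G(θ)| ≤ 1` for all `θ`. -/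
theorem ftcs_von_neumann_stability (a ν τ h : ℝ)
    (ha : 0 < a) (hν : 0 < ν) (hτ : 0 < τ) (hh : 0 < h)
    (hS : ν * τ / h ^ 2 ≤ 1 / 2)
    (hCFL : (a * τ / h) ^ 2 ≤ 2 * (ν * τ / h ^ 2)) :
    ∀ θ : ℝ,
      ‖
        (1 - Complex.I * ((a * τ / h : ℝ) : ℂ) * ((Real.sin θ : ℝ) : ℂ)
          - 4 * ((ν * τ / h ^ 2 : ℝ) : ℂ) * ((Real.sin (θ / 2) : ℝ) : ℂ) ^ 2)‖ ≤ 1 := by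
  intro θ
  set C : ℝ := a * τ / h with hC
  set S : ℝ := ν * τ / h ^ 2 with hSdef
  have hS0 : 0 ≤ S := by positivity
  set s : ℝ := Real.sin (θ / 2) with hs
  set c : ℝ := Real.cos (θ / 2) with hc
  have hsc : s ^ 2 + c ^ 2 = 1 := Real.sin_sq_add_cos_sq _
  have hsin : Real.sin θ = 2 * s * c := by
    rw [hs, hc, ← Real.sin_two_mul]; ring_nf
  have hsq : (‖
      (1 - Complex.I * (C : ℂ) * ((Real.sin θ : ℝ) : ℂ)
        - 4 * (S : ℂ) * ((s : ℝ) : ℂ) ^ 2)‖) ^ 2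
      = (1 - 4 * S * s ^ 2) ^ 2 + (C * Real.sin θ) ^ 2 := by
    rw [Complex.sq_norm,
      show (1 - Complex.I * (C : ℂ) * ((Real.sin θ : ℝ) : ℂ)
          - 4 * (S : ℂ) * ((s : ℝ) : ℂ) ^ 2)
        = ((1 - 4 * S * s ^ 2 : ℝ) : ℂ) + ((-(C * Real.sin θ) : ℝ) : ℂ) * Complex.I by
        push_cast; ring,
      Complex.normSq_add_mul_I]
    ring
  have key : (1 - 4 * S * s ^ 2) ^ 2 + (C * Real.sin θ) ^ 2 ≤ 1 := by
    rw [hsin]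
    have hs1 : s ^ 2 ≤ 1 := by nlinarith [sq_nonneg c]
    have hs0 : 0 ≤ s ^ 2 := sq_nonneg s
    have hc2 : c ^ 2 = 1 - s ^ 2 := by linarith
    have h1 : 0 ≤ 2 * S - C ^ 2 := by linarith
    have h2 : 0 ≤ 2 * S - 4 * S ^ 2 := by nlinarith
    have he : (C * (2 * s * c)) ^ 2 = 4 * C ^ 2 * s ^ 2 * (1 - s ^ 2) := by
      rw [← hc2]; ring
    rw [he]
    nlinarith [mul_nonneg hs0 (mul_nonneg hs0 h2),
      mul_nonneg hs0 (mul_nonneg (sub_nonneg.2 hs1) h1), hc2]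
  have habs := norm_nonneg
    (1 - Complex.I * (C : ℂ) * ((Real.sin θ : ℝ) : ℂ) - 4 * (S : ℂ) * ((s : ℝ) : ℂ) ^ 2)
  nlinarith [hsq, key, habs]
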